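/- Let f_{r₁}(z) = z^{n+1} − z^{n−1} v_n − ⋯ − z v₂ − v₁ with v_j ∈ ℍ. Then every zero z of f_{r₁} satisfies |z| ≤ (1 + γ + 2 Σ_{j=1}^{n} |v_j|²)^{1/6}, where γ = |v₁ v_n|² + |v₂ v_n|² + Σ_{j=1}^{n−1} |v_j + v_n v_{j+2}|² with v_{n+1} = 0. -/

import Mathlib

/-!
Every quaternion satisfies `z * z = 2 Re z • z - |z|²`, so each power `z ^ k` is a real
combination `a_k + b_k z`. For a right root `z` of `∑ X ^ k c_k` this collapses the equation to
`α + z β = 0`, and then `w = β⁻¹ z β` (or `z` itself if `β = 0`) is a left root `∑ c_k w ^ k = 0`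
of the same norm, because conjugation preserves the real coefficients `a_k, b_k`.

For the left root, `w ^ (n + 1) = ∑ v_{k+1} w ^ k`, and substituting this once more gives
`w ^ (n + 3) = v_n v_1 + v_n v_2 w + ∑ (v_j + v_n v_{j+2}) w ^ (j + 1)`. Cauchy–Schwarz against
the geometric sum `∑ t ^ (2k)`, `t = |w|`, turns the two relations into `t²(t² - 1) ≤ ∑ |v_j|²`
and `t⁴(t² - 1) ≤ γ`, and these force `t⁶ ≤ 1 + γ + 2 ∑ |v_j|²`.
-/

open scoped Quaternion
open Finset Matrix

noncomputable def specNorm {n : ℕ} (A : Matrix (Fin n) (Fin n) ℍ[ℝ]) : ℝ :=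
  sSup {r : ℝ | ∃ x : Fin n → ℍ[ℝ], x ≠ 0 ∧
    r = Real.sqrt (∑ i, ‖A.mulVec x i‖ ^ 2) / Real.sqrt (∑ i, ‖x i‖ ^ 2)}

theorem Finset.sum_Icc_one_eq_sum_range {M : Type*} [AddCommMonoid M] (f : ℕ → M) (n : ℕ) :
    ∑ j ∈ Icc 1 n, f j = ∑ k ∈ range n, f (k + 1) := by
  rw [← Finset.Ico_add_one_right_eq_Icc, sum_Ico_eq_sum_range]
  simp [add_comm]

theorem SemiconjBy.pow_eq_smul_one_add_smul {K R : Type*} [CommSemiring K] [DivisionRing R]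
    [Algebra K R] {c w z : R} (h : SemiconjBy c w z) (hc : c ≠ 0) {k : ℕ} {a b : K}
    (hz : z ^ k = a • 1 + b • z) : w ^ k = a • 1 + b • w := by
  refine mul_left_cancel₀ hc ?_
  rw [(h.pow_right k).eq, hz, add_mul, smul_mul_assoc, smul_mul_assoc, one_mul, ← h.eq, mul_add,
    mul_smul_comm, mul_smul_comm, mul_one]

namespace Quaternion

theorem mul_self_eq_smul_sub (z : ℍ[ℝ]) : z * z = (2 * z.re) • z - normSq z • 1 := by
  ext <;> simp [re_mul, imI_mul, imJ_mul, imK_mul, normSq_def'] <;> ring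

theorem exists_pow_eq_smul_one_add_smul (z : ℍ[ℝ]) (k : ℕ) : ∃ a b : ℝ, z ^ k = a • 1 + b • z := by
  induction k with
  | zero => exact ⟨1, 0, by simp⟩
  | succ k ih =>
    obtain ⟨a, b, h⟩ := ih
    refine ⟨-(b * normSq z), a + 2 * z.re * b, ?_⟩
    rw [pow_succ, h, add_mul, smul_mul_assoc, smul_mul_assoc, one_mul, mul_self_eq_smul_sub]
    module

theorem exists_norm_eq_sum_mul_pow_eq_zero {ι : Type*} (s : Finset ι) (e : ι → ℕ)
    (c : ι → ℍ[ℝ]) {z : ℍ[ℝ]} (hz : ∑ i ∈ s, z ^ e i * c i = 0) :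
    ∃ w : ℍ[ℝ], ‖w‖ = ‖z‖ ∧ ∑ i ∈ s, c i * w ^ e i = 0 := by
  choose a b hab using exists_pow_eq_smul_one_add_smul z
  set α := ∑ i ∈ s, a (e i) • c i
  set β := ∑ i ∈ s, b (e i) • c i
  have hright : ∑ i ∈ s, z ^ e i * c i = α + z * β := by
    simp only [hab, add_mul, smul_mul_assoc, one_mul, mul_sum, mul_smul_comm, sum_add_distrib, α, β]
  have hleft (w : ℍ[ℝ]) (hw : ∀ k, w ^ k = a k • 1 + b k • w) :
      ∑ i ∈ s, c i * w ^ e i = α + β * w := by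
    simp only [hw, mul_add, mul_smul_comm, mul_one, sum_mul, smul_mul_assoc, sum_add_distrib, α, β]
  by_cases hβ : β = 0
  · refine ⟨z, rfl, ?_⟩
    rw [hright, hβ, mul_zero, add_zero] at hz
    rw [hleft z hab, hz, hβ, zero_mul, add_zero]
  · have hconj : SemiconjBy β (β⁻¹ * z * β) z := by
      simp [SemiconjBy, ← mul_assoc, mul_inv_cancel₀ hβ]
    have hnorm : ‖β⁻¹ * z * β‖ = ‖z‖ := by
      rw [norm_mul, norm_mul, norm_inv]
      field_simp [norm_ne_zero_iff.mpr hβ]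
    refine ⟨β⁻¹ * z * β, hnorm, ?_⟩
    rw [hleft _ fun k => hconj.pow_eq_smul_one_add_smul hβ (hab k), hconj.eq, ← hright, hz]

end Quaternion

theorem Real.pow_mul_sq_sub_one_le_sum_sq (a : ℕ → ℝ) {t : ℝ} (ht : 0 ≤ t) {m d : ℕ}
    (h : t ^ (m + d) ≤ ∑ k ∈ range m, a k * t ^ k) :
    t ^ (2 * d) * (t ^ 2 - 1) ≤ ∑ k ∈ range m, a k ^ 2 := by
  set A := ∑ k ∈ range m, a k ^ 2
  have hA : 0 ≤ A := by positivity
  rcases le_or_gt t 1 with ht1 | ht1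
  · exact (mul_nonpos_of_nonneg_of_nonpos (by positivity) (by nlinarith)).trans hA
  have hcs : (t ^ 2) ^ (m + d) ≤ A * ∑ k ∈ range m, (t ^ 2) ^ k := calc
    (t ^ 2) ^ (m + d) = (t ^ (m + d)) ^ 2 := by ring
    _ ≤ (∑ k ∈ range m, a k * t ^ k) ^ 2 := pow_le_pow_left₀ (by positivity) h 2
    _ ≤ A * ∑ k ∈ range m, (t ^ k) ^ 2 := sum_mul_sq_le_sq_mul_sq _ _ _
    _ = A * ∑ k ∈ range m, (t ^ 2) ^ k := by simp_rw [← pow_mul, mul_comm]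
  refine le_of_mul_le_mul_left ?_ (by positivity : 0 < (t ^ 2) ^ m)
  calc (t ^ 2) ^ m * (t ^ (2 * d) * (t ^ 2 - 1)) = (t ^ 2) ^ (m + d) * (t ^ 2 - 1) := by ring
    _ ≤ A * (∑ k ∈ range m, (t ^ 2) ^ k) * (t ^ 2 - 1) :=
      mul_le_mul_of_nonneg_right hcs (by nlinarith)
    _ = A * ((t ^ 2) ^ m - 1) := by rw [mul_assoc, geom_sum_mul]
    _ ≤ (t ^ 2) ^ m * A := by nlinarith

theorem norm_pow_mul_sq_sub_one_le_sum_sq {R : Type*} [NormedDivisionRing R] (u : ℕ → R) {w : R}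
    {m d : ℕ} (h : w ^ (m + d) = ∑ k ∈ range m, u k * w ^ k) :
    ‖w‖ ^ (2 * d) * (‖w‖ ^ 2 - 1) ≤ ∑ k ∈ range m, ‖u k‖ ^ 2 :=
  Real.pow_mul_sq_sub_one_le_sum_sq _ (norm_nonneg w) <| calc
    ‖w‖ ^ (m + d) = ‖∑ k ∈ range m, u k * w ^ k‖ := by rw [← norm_pow, h]
    _ ≤ ∑ k ∈ range m, ‖u k‖ * ‖w‖ ^ k :=
      (norm_sum_le _ _).trans_eq (by simp only [norm_mul, norm_pow])

def coeffPowAddThree {R : Type*} [Ring R] (u : ℕ → R) (m : ℕ) : ℕ → R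
  | 0 => u (m - 1) * u 0
  | 1 => u (m - 1) * u 1
  | k + 2 => u k + u (m - 1) * u (k + 2)

theorem pow_add_three_eq_sum {R : Type*} [Ring R] (u : ℕ → R) {m : ℕ} (hm : 0 < m) (hu : u m = 0)
    {w : R} (hw : w ^ (m + 1) = ∑ k ∈ range m, u k * w ^ k) :
    w ^ (m + 3) = ∑ k ∈ range (m + 1), coeffPowAddThree u m k * w ^ k := by
  obtain ⟨l, rfl⟩ : ∃ l, m = l + 1 := ⟨m - 1, by omega⟩
  have h1 : w ^ (l + 1 + 3) = ∑ k ∈ range (l + 1), u k * w ^ (k + 2) := by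
    rw [show l + 1 + 3 = l + 1 + 1 + 2 by ring, pow_add, hw, sum_mul]
    simp only [mul_assoc, ← pow_add]
  have h2 : u l * w ^ (l + 2) = ∑ k ∈ range (l + 2), u l * u k * w ^ k := by
    rw [hw, mul_sum, sum_range_succ _ (l + 1), hu]
    simp only [mul_assoc, mul_zero, zero_mul, add_zero]
  rw [h1, sum_range_succ, h2, sum_range_succ', sum_range_succ', sum_range_succ' _ (l + 1),
    sum_range_succ']
  simp only [coeffPowAddThree, Nat.add_sub_cancel, add_mul, sum_add_distrib, mul_assoc]
  abel

theorem sum_norm_sq_coeffPowAddThree {R : Type*} [NormedDivisionRing R] (v : ℕ → R) {n : ℕ}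
    (hn : 0 < n) :
    ∑ k ∈ range (n + 1), ‖coeffPowAddThree (fun k => v (k + 1)) n k‖ ^ 2 =
      ‖v 1 * v n‖ ^ 2 + ‖v 2 * v n‖ ^ 2 + ∑ j ∈ Icc 1 (n - 1), ‖v j + v n * v (j + 2)‖ ^ 2 := by
  obtain ⟨l, rfl⟩ : ∃ l, n = l + 1 := ⟨n - 1, by omega⟩
  rw [sum_range_succ', sum_range_succ', sum_Icc_one_eq_sum_range]
  simp only [coeffPowAddThree, Nat.add_sub_cancel, norm_mul, mul_comm ‖v (l + 1)‖]
  ring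

theorem pow_three_le_one_add_add_two_mul {x S γ : ℝ} (hS : 0 ≤ S)
    (h1 : x * (x - 1) ≤ S) (h2 : x ^ 2 * (x - 1) ≤ γ) : x ^ 3 ≤ 1 + γ + 2 * S := by
  have : x ≤ 1 + S := by nlinarith
  nlinarith

theorem bound_thm4 (n : ℕ) (hn : 3 ≤ n) (v : ℕ → ℍ[ℝ]) (hv : v (n + 1) = 0) (z : ℍ[ℝ])
    (hz : z ^ (n + 1) - ∑ j ∈ Finset.Icc 1 n, z ^ (j - 1) * v j = 0) :
    ‖z‖ ≤ (1 + (‖v 1 * v n‖ ^ 2 + ‖v 2 * v n‖ ^ 2 +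
        ∑ j ∈ Finset.Icc 1 (n - 1), ‖v j + v n * v (j + 2)‖ ^ 2) +
      2 * ∑ j ∈ Finset.Icc 1 n, ‖v j‖ ^ 2) ^ ((1 : ℝ) / 6) := by
  -- the index `none` carries the leading term `z ^ (n + 1)`
  obtain ⟨w, hwz, hw⟩ := Quaternion.exists_norm_eq_sum_mul_pow_eq_zero (Icc 1 n).insertNone
    (fun i => i.elim (n + 1) (· - 1)) (fun i => i.elim 1 (- v ·))
    (by simpa [sum_insertNone, sub_eq_add_neg] using hz)
  replace hw : w ^ (n + 1) = ∑ k ∈ range n, v (k + 1) * w ^ k := by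
    simpa [sum_insertNone, sum_Icc_one_eq_sum_range, ← sub_eq_add_neg, sub_eq_zero] using hw
  have hS := norm_pow_mul_sq_sub_one_le_sum_sq _ (d := 1) hw
  have hγ := norm_pow_mul_sq_sub_one_le_sum_sq _ (d := 2)
    (pow_add_three_eq_sum (fun k => v (k + 1)) (by omega) hv hw)
  rw [sum_norm_sq_coeffPowAddThree v (by omega)] at hγ
  rw [sum_Icc_one_eq_sum_range (fun j => ‖v j‖ ^ 2), ← hwz, one_div,
    Real.le_rpow_inv_iff_of_pos (norm_nonneg w) (by positivity) (by norm_num),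
    Real.rpow_ofNat, show 6 = 2 * 3 by rfl, pow_mul]
  exact pow_three_le_one_add_add_two_mul (by positivity) (by simpa using hS)
    (by simpa [← pow_mul] using hγ)
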